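/- arXiv:1212.2597 — 2 statements merged into one kernel-verified Lean document; each statement's English description precedes it below -/
import Mathlib

section
/- Given a family {v_α : α ∈ [0,1]} of subsets of ℝ^m such that v₁ ≠ ∅, each v_α is compact and convex, v_α = ⋂_{γ<α} v_γ for all α ∈ (0,1], and v₀ = closure(⋃_{γ>0} v_γ), there exists a unique fuzzy number u on ℝ^m with [u]_α = v_α for every α ∈ [0,1]. -/
open Set Metric Filter

/-- `ℝ^m` with the Euclidean metric. -/
abbrev Em (m : ℕ) := EuclideanSpace ℝ (Fin m)

/-- A fuzzy number on `ℝ^m`: a `[0,1]`-valued, normal, fuzzy convex,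
upper semicontinuous function with bounded support. -/
def IsFuzzyNumber {m : ℕ} (u : Em m → ℝ) : Prop :=
  (∀ x, u x ∈ Icc (0:ℝ) 1) ∧
  (∃ x, u x = 1) ∧
  (∀ x y : Em m, ∀ t ∈ Icc (0:ℝ) 1, min (u x) (u y) ≤ u (t • x + (1 - t) • y)) ∧
  UpperSemicontinuous u ∧
  Bornology.IsBounded {x | 0 < u x}

/-- The `α`-cut of a fuzzy set: `{x | u x ≥ α}` for `α ≠ 0`, and the closure
of the support for `α = 0`. -/
def cut {m : ℕ} (u : Em m → ℝ) (α : ℝ) : Set (Em m) :=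
  if α = 0 then closure {x | 0 < u x} else {x | α ≤ u x}

/-- Representation theorem: a family `{v_α : α ∈ [0,1]}` of compact convex sets with
`v₁ ≠ ∅`, `v_α = ⋂_{0<γ<α} v_γ` for `α ∈ (0,1]` and `v₀ = closure (⋃_{γ>0} v_γ)`
is the family of cuts of a unique fuzzy number. -/
theorem exists_unique_fuzzyNumber_of_cuts {m : ℕ} (v : ℝ → Set (Em m))
    (h1 : (v 1).Nonempty)
    (hcc : ∀ α ∈ Icc (0:ℝ) 1, IsCompact (v α) ∧ Convex ℝ (v α))
    (hiInter : ∀ α ∈ Ioc (0:ℝ) 1, v α = ⋂ γ ∈ Ioo (0:ℝ) α, v γ)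
    (h0 : v 0 = closure (⋃ γ ∈ Ioc (0:ℝ) 1, v γ)) :
    ∃! u : Em m → ℝ, IsFuzzyNumber u ∧ ∀ α ∈ Icc (0:ℝ) 1, cut u α = v α := by
  classical
  set S : Em m → Set ℝ := fun x => {α | α ∈ Ioc (0:ℝ) 1 ∧ x ∈ v α} with hS
  set u : Em m → ℝ := fun x => sSup (insert 0 (S x)) with hu
  have hbdd : ∀ x, BddAbove (insert 0 (S x)) := by
    intro x
    refine ⟨1, ?_⟩
    rintro β (rfl | hβ)
    · norm_num
    · exact hβ.1.2
  have hne : ∀ x, (insert 0 (S x)).Nonempty := fun x => ⟨0, mem_insert _ _⟩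
  have hu0 : ∀ x, 0 ≤ u x := fun x => le_csSup (hbdd x) (mem_insert _ _)
  have hu1 : ∀ x, u x ≤ 1 := by
    intro x
    refine csSup_le (hne x) ?_
    rintro β (rfl | hβ)
    · norm_num
    · exact hβ.1.2
  have hanti : ∀ γ β : ℝ, 0 < γ → γ ≤ β → β ≤ 1 → v β ⊆ v γ := by
    intro γ β hγ hγβ hβ1
    rcases eq_or_lt_of_le hγβ with rfl | h
    · exact subset_rfl
    · rw [hiInter β ⟨hγ.trans h, hβ1⟩]
      exact biInter_subset_of_mem ⟨hγ, h⟩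
  have hmem : ∀ x, ∀ α ∈ Ioc (0:ℝ) 1, (α ≤ u x ↔ x ∈ v α) := by
    intro x α hα
    constructor
    · intro h
      rw [hiInter α hα]
      refine mem_iInter₂.2 fun γ hγ => ?_
      obtain ⟨β, hβmem, hγβ⟩ := exists_lt_of_lt_csSup (hne x) (lt_of_lt_of_le hγ.2 h)
      rcases hβmem with rfl | hβ
      · exact absurd hγ.1 (not_lt.2 hγβ.le)
      · exact hanti γ β hγ.1 hγβ.le hβ.1.2 hβ.2
    · intro h
      exact le_csSup (hbdd x) (mem_insert_of_mem _ ⟨hα, h⟩)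
  have hsupp : {x | 0 < u x} = ⋃ γ ∈ Ioc (0:ℝ) 1, v γ := by
    ext x
    simp only [mem_setOf_eq, mem_iUnion]
    constructor
    · intro h
      obtain ⟨β, hβmem, h0β⟩ := exists_lt_of_lt_csSup (hne x) h
      rcases hβmem with rfl | hβ
      · exact absurd h0β (lt_irrefl 0)
      · exact ⟨β, hβ.1, hβ.2⟩
    · rintro ⟨γ, hγ, hx⟩
      exact lt_of_lt_of_le hγ.1 ((hmem x γ hγ).2 hx)
  refine ⟨u, ⟨⟨fun x => ⟨hu0 x, hu1 x⟩, ?_, ?_, ?_, ?_⟩, ?_⟩, ?_⟩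
  · -- normal
    obtain ⟨x, hx⟩ := h1
    exact ⟨x, le_antisymm (hu1 x) ((hmem x 1 ⟨one_pos, le_refl 1⟩).2 hx)⟩
  · -- fuzzy convex
    intro x y t ht
    by_contra hcon
    push_neg at hcon
    obtain ⟨γ, h1γ, h2γ⟩ := exists_between hcon
    have hγ0 : 0 < γ := lt_of_le_of_lt (hu0 _) h1γ
    have hγ1 : γ ≤ 1 := le_trans h2γ.le (le_trans (min_le_left _ _) (hu1 x))
    have hx : x ∈ v γ := (hmem x γ ⟨hγ0, hγ1⟩).1 (le_trans h2γ.le (min_le_left _ _))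
    have hy : y ∈ v γ := (hmem y γ ⟨hγ0, hγ1⟩).1 (le_trans h2γ.le (min_le_right _ _))
    have hz : t • x + (1 - t) • y ∈ v γ :=
      (hcc γ ⟨hγ0.le, hγ1⟩).2 hx hy ht.1 (by linarith [ht.2]) (by ring)
    exact absurd ((hmem _ γ ⟨hγ0, hγ1⟩).2 hz) (not_le.2 h1γ)
  · -- upper semicontinuous
    rw [upperSemicontinuous_iff_isOpen_preimage]
    intro y
    rcases le_or_gt y 1 with hy1 | hy1
    · rw [isOpen_iff_mem_nhds]
      intro x hx
      have hx' : u x < y := hx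
      obtain ⟨γ, h1γ, h2γ⟩ := exists_between hx'
      have hγ0 : 0 < γ := lt_of_le_of_lt (hu0 x) h1γ
      have hγ1 : γ ≤ 1 := le_trans h2γ.le hy1
      have hclosed : IsClosed (v γ) := (hcc γ ⟨hγ0.le, hγ1⟩).1.isClosed
      have hxnot : x ∈ (v γ)ᶜ := fun h => absurd ((hmem x γ ⟨hγ0, hγ1⟩).2 h) (not_le.2 h1γ)
      refine mem_of_superset (hclosed.isOpen_compl.mem_nhds hxnot) ?_
      intro z hz
      have : ¬ γ ≤ u z := fun h => hz ((hmem z γ ⟨hγ0, hγ1⟩).1 h)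
      exact lt_trans (not_le.1 this) h2γ
    · have : u ⁻¹' Iio y = univ := by
        ext z; simp only [mem_preimage, mem_Iio, mem_univ, iff_true]
        exact lt_of_le_of_lt (hu1 z) hy1
      rw [this]; exact isOpen_univ
  · -- bounded support
    have hsub : {x | 0 < u x} ⊆ v 0 := by
      rw [hsupp, h0]
      exact subset_closure
    exact ((hcc 0 ⟨le_refl 0, zero_le_one⟩).1.isBounded).subset hsub
  · -- cuts
    intro α hα
    rcases eq_or_ne α 0 with rfl | hα0
    · rw [cut, if_pos rfl, hsupp, h0]
    · rw [cut, if_neg hα0]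
      ext x
      exact hmem x α ⟨lt_of_le_of_ne hα.1 (Ne.symm hα0), hα.2⟩
  · -- uniqueness
    rintro u' ⟨⟨hbound, -, -, -, -⟩, hcut⟩
    funext x
    have hu'0 : 0 ≤ u' x := (hbound x).1
    have hu'1 : u' x ≤ 1 := (hbound x).2
    have hmem' : ∀ α ∈ Ioc (0:ℝ) 1, (x ∈ v α ↔ α ≤ u' x) := by
      intro α hα
      rw [← hcut α ⟨hα.1.le, hα.2⟩, cut, if_neg (ne_of_gt hα.1)]
      rfl
    have hset : insert 0 (S x) = Icc 0 (u' x) := by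
      ext β
      simp only [mem_insert_iff, hS, mem_setOf_eq, mem_Icc]
      constructor
      · rintro (rfl | ⟨hβ, hx⟩)
        · exact ⟨le_refl 0, hu'0⟩
        · exact ⟨hβ.1.le, (hmem' β hβ).1 hx⟩
      · rintro ⟨h0β, hβu⟩
        rcases eq_or_lt_of_le h0β with rfl | hβ0
        · exact Or.inl rfl
        · exact Or.inr ⟨⟨hβ0, hβu.trans hu'1⟩, (hmem' β ⟨hβ0, hβu.trans hu'1⟩).2 hβu⟩
    show u' x = u x
    rw [hu]
    simp only
    rw [hset, csSup_Icc hu'0]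
end

section
/- There exists a uniformly support-bounded sequence (u_n) of fuzzy numbers on ℝ, with {α ↦ [u_n]_α} equi-left-continuous on (0,1], such that the set {u_n : n ∈ ℕ} is closed in the supremum metric d_∞ but not compact in (E¹, d_∞). Consequently, the characterization 'closed + uniformly support-bounded + equi-left-continuous cuts on (0,1] implies compact in d_∞' is false. -/
open Set Metric Filter

/-- A fuzzy number on `ℝ`: a `[0,1]`-valued, normal, fuzzy convex,
upper semicontinuous function with bounded support. -/
def IsFuzzyNumberR (u : ℝ → ℝ) : Prop :=
  (∀ x, u x ∈ Icc (0:ℝ) 1) ∧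
  (∃ x, u x = 1) ∧
  (∀ x y : ℝ, ∀ t ∈ Icc (0:ℝ) 1, min (u x) (u y) ≤ u (t * x + (1 - t) * y)) ∧
  UpperSemicontinuous u ∧
  Bornology.IsBounded {x | 0 < u x}

/-- The `α`-cut: `{x | u x ≥ α}` for `α ≠ 0`, the closure of the support for `α = 0`. -/
def cutR (u : ℝ → ℝ) (α : ℝ) : Set ℝ :=
  if α = 0 then closure {x | 0 < u x} else {x | α ≤ u x}

/-- The counterexample sequence: `u_n(0)=1`, `u_n(τ) = 1/3 + (2/3)(1-τ)^n` on `(0,1]`,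
`u_n = 0` elsewhere. -/
noncomputable def un (n : ℕ) : ℝ → ℝ := fun τ =>
  if τ = 0 then 1 else if τ ∈ Ioc (0:ℝ) 1 then 1/3 + 2/3 * (1 - τ)^n else 0

/-- heights -/
noncomputable def ccc (n : ℕ) : ℝ := 1/2 + 1/(n+2)

lemma nat_cast_nn (n : ℕ) : (0:ℝ) ≤ (n:ℝ) := Nat.cast_nonneg n

lemma ccc_gt_half (n : ℕ) : 1/2 < ccc n := by
  have : (0:ℝ) < 1/((n:ℝ)+2) := by positivity
  unfold ccc; linarith

lemma ccc_le_one (n : ℕ) : ccc n ≤ 1 := by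
  have h0 := nat_cast_nn n
  have : 1/((n:ℝ)+2) ≤ 1/2 := by
    apply one_div_le_one_div_of_le <;> linarith
  unfold ccc; linarith

lemma ccc_pos (n : ℕ) : 0 < ccc n := lt_trans (by norm_num) (ccc_gt_half n)

lemma ccc_strict_anti {m n : ℕ} (h : m < n) : ccc n < ccc m := by
  have h0 := nat_cast_nn m
  have : 1/((n:ℝ)+2) < 1/((m:ℝ)+2) := by
    apply one_div_lt_one_div_of_lt
    · linarith
    · have := (Nat.cast_lt (α := ℝ)).2 h; linarith
  unfold ccc; linarith

lemma ccc_anti {m n : ℕ} (h : m ≤ n) : ccc n ≤ ccc m := by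
  rcases h.lt_or_eq with h | h
  · exact (ccc_strict_anti h).le
  · rw [h]

/-- the counterexample functions -/
noncomputable def vvv (n : ℕ) : ℝ → ℝ := fun τ =>
  if τ = 0 then 1 else if τ ∈ Ioc (0:ℝ) 1 then ccc n else 0

lemma vvv_mem_Icc (n : ℕ) (x : ℝ) : vvv n x ∈ Icc (0:ℝ) 1 := by
  unfold vvv
  split_ifs with h1 h2
  · exact ⟨zero_le_one, le_refl 1⟩
  · exact ⟨(ccc_pos n).le, ccc_le_one n⟩
  · exact ⟨le_refl 0, zero_le_one⟩

lemma vvv_zero (n : ℕ) : vvv n 0 = 1 := by simp [vvv]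

lemma vvv_Ioc (n : ℕ) {x : ℝ} (h : x ∈ Ioc (0:ℝ) 1) : vvv n x = ccc n := by
  have : x ≠ 0 := ne_of_gt h.1
  simp [vvv, this, h]

lemma vvv_out (n : ℕ) {x : ℝ} (h : x ∉ Icc (0:ℝ) 1) : vvv n x = 0 := by
  have h0 : x ≠ 0 := by rintro rfl; exact h ⟨le_refl 0, zero_le_one⟩
  have hI : x ∉ Ioc (0:ℝ) 1 := fun hx => h ⟨hx.1.le, hx.2⟩
  simp [vvv, h0, hI]

lemma vvv_le_ccc_of_ne (n : ℕ) {x : ℝ} (hx : x ≠ 0) : vvv n x ≤ ccc n := by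
  unfold vvv
  rw [if_neg hx]
  split_ifs
  · exact le_refl _
  · exact (ccc_pos n).le

lemma vvv_indicator (n : ℕ) :
    vvv n = (Icc (0:ℝ) 1).indicator (fun _ => ccc n)
      + ({0} : Set ℝ).indicator (fun _ => 1 - ccc n) := by
  funext x
  by_cases h0 : x = 0
  · subst h0
    simp only [Pi.add_apply, vvv_zero,
      indicator_of_mem (by exact ⟨le_refl (0:ℝ), zero_le_one⟩ : (0:ℝ) ∈ Icc (0:ℝ) 1),
      indicator_of_mem (mem_singleton (0:ℝ))]
    ring
  · by_cases hI : x ∈ Ioc (0:ℝ) 1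
    · have hIcc : x ∈ Icc (0:ℝ) 1 := ⟨hI.1.le, hI.2⟩
      simp only [Pi.add_apply, vvv_Ioc n hI, indicator_of_mem hIcc,
        indicator_of_notMem (by simpa using h0 : x ∉ ({0}:Set ℝ))]
      ring
    · have hIcc : x ∉ Icc (0:ℝ) 1 := by
        intro hx
        exact hI ⟨lt_of_le_of_ne hx.1 (Ne.symm h0), hx.2⟩
      simp only [Pi.add_apply, vvv_out n hIcc, indicator_of_notMem hIcc,
        indicator_of_notMem (by simpa using h0 : x ∉ ({0}:Set ℝ))]
      ring

lemma vvv_usc (n : ℕ) : UpperSemicontinuous (vvv n) := by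
  rw [vvv_indicator]
  exact (isClosed_Icc.upperSemicontinuous_indicator (ccc_pos n).le).add
    (isClosed_singleton.upperSemicontinuous_indicator (by linarith [ccc_le_one n]))

lemma vvv_fuzzy (n : ℕ) : IsFuzzyNumberR (vvv n) := by
  refine ⟨vvv_mem_Icc n, ⟨0, vvv_zero n⟩, ?_, vvv_usc n, ?_⟩
  · intro x y t ht
    set z := t * x + (1 - t) * y with hz
    have hmin : min x y ≤ z := by
      nlinarith [min_le_left x y, min_le_right x y, ht.1, ht.2]
    have hmax : z ≤ max x y := by
      nlinarith [le_max_left x y, le_max_right x y, ht.1, ht.2]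
    by_cases hz0 : z = 0
    · rw [hz0, vvv_zero]
      exact min_le_of_left_le (vvv_mem_Icc n x).2
    by_cases hzI : z ∈ Ioc (0:ℝ) 1
    · rw [vvv_Ioc n hzI]
      rcases eq_or_ne x 0 with hx | hx
      · rcases eq_or_ne y 0 with hy | hy
        · exfalso; apply hz0; rw [hz, hx, hy]; ring
        · exact min_le_of_right_le (vvv_le_ccc_of_ne n hy)
      · exact min_le_of_left_le (vvv_le_ccc_of_ne n hx)
    · have hval : vvv n z = 0 := by
        apply vvv_out
        intro hzIcc
        exact hzI ⟨lt_of_le_of_ne hzIcc.1 (Ne.symm hz0), hzIcc.2⟩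
      rw [hval]
      simp only [mem_Ioc, not_and_or, not_lt, not_le] at hzI
      rcases hzI with h | h
      · have hz' : min x y < 0 := lt_of_le_of_lt hmin (lt_of_le_of_ne h hz0)
        rcases min_lt_iff.mp hz' with hx | hy
        · exact min_le_of_left_le (le_of_eq (vvv_out n (fun hc => absurd hc.1 (not_le.2 hx))))
        · exact min_le_of_right_le (le_of_eq (vvv_out n (fun hc => absurd hc.1 (not_le.2 hy))))
      · have hz' : 1 < max x y := lt_of_lt_of_le h hmax
        rcases lt_max_iff.mp hz' with hx | hy
        · exact min_le_of_left_le (le_of_eq (vvv_out n (fun hc => absurd hc.2 (not_le.2 hx))))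
        · exact min_le_of_right_le (le_of_eq (vvv_out n (fun hc => absurd hc.2 (not_le.2 hy))))
  · apply (Metric.isBounded_Icc (0:ℝ) 1).subset
    intro x hx
    by_contra hmem
    have := vvv_out n hmem
    simp only [mem_setOf_eq] at hx
    linarith

-- cut lemmas
lemma cut_low (n : ℕ) {α : ℝ} (h0 : 0 < α) (h : α ≤ ccc n) :
    cutR (vvv n) α = Icc 0 1 := by
  unfold cutR
  rw [if_neg h0.ne']
  ext x
  simp only [mem_setOf_eq, mem_Icc]
  constructor
  · intro hx
    by_contra hc
    have := vvv_out n (by simpa [mem_Icc] using hc)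
    have hcle := ccc_le_one n
    linarith
  · intro hx
    by_cases hx0 : x = 0
    · rw [hx0, vvv_zero]; linarith [ccc_le_one n]
    · rw [vvv_Ioc n ⟨lt_of_le_of_ne hx.1 (Ne.symm hx0), hx.2⟩]; exact h
lemma cut_high (n : ℕ) {α : ℝ} (h : ccc n < α) (h1 : α ≤ 1) :
    cutR (vvv n) α = {0} := by
  have h0 : 0 < α := lt_trans (ccc_pos n) h
  unfold cutR
  rw [if_neg h0.ne']
  ext x
  simp only [mem_setOf_eq, mem_singleton_iff]
  constructor
  · intro hx
    by_contra hc
    have := vvv_le_ccc_of_ne n hc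
    linarith
  · rintro rfl; rw [vvv_zero]; exact h1
lemma cut_zero_subset (n : ℕ) : cutR (vvv n) 0 ⊆ Icc 0 1 := by
  unfold cutR
  rw [if_pos rfl]
  apply closure_minimal _ isClosed_Icc
  intro x hx
  by_contra hc
  have := vvv_out n hc
  simp only [mem_setOf_eq] at hx
  linarith

/-- The space `E¹` of fuzzy numbers on `ℝ`. -/
def FuzzyR := {u : ℝ → ℝ // IsFuzzyNumberR u}

/-- The supremum (extended pseudo)metric `d_∞(u,v) = sup_{α∈[0,1]} H([u]_α,[v]_α)`
on `E¹`; it induces the supremum metric topology. -/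
noncomputable instance : PseudoEMetricSpace FuzzyR where
  edist u v := ⨆ α : Icc (0:ℝ) 1, EMetric.hausdorffEdist (cutR u.1 α.1) (cutR v.1 α.1)
  edist_self u := by simp [EMetric.hausdorffEdist, Metric.hausdorffEDist_self]
  edist_comm u v := iSup_congr fun α => EMetric.hausdorffEdist_comm
  edist_triangle u v w := by
    refine iSup_le fun α =>
      le_trans (EMetric.hausdorffEdist_triangle (t := cutR v.1 α.1)) ?_
    exact add_le_add
      (le_iSup (fun β : Icc (0:ℝ) 1 =>
        EMetric.hausdorffEdist (cutR u.1 β.1) (cutR v.1 β.1)) α)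
      (le_iSup (fun β : Icc (0:ℝ) 1 =>
        EMetric.hausdorffEdist (cutR v.1 β.1) (cutR w.1 β.1)) α)

lemma edist_fuzzy_def (u v : FuzzyR) :
    edist u v = ⨆ α : Icc (0:ℝ) 1,
      EMetric.hausdorffEdist (cutR u.1 α.1) (cutR v.1 α.1) := rfl

/-- cuts (at nonzero levels) of a fuzzy number are closed -/
lemma cut_closed {u : ℝ → ℝ} (hu : IsFuzzyNumberR u) {α : ℝ} (hα : α ≠ 0) :
    IsClosed (cutR u α) := by
  unfold cutR
  rw [if_neg hα]
  have : {x | α ≤ u x} = (u ⁻¹' Iio α)ᶜ := by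
    ext x; simp [not_lt]
  rw [this]
  exact (upperSemicontinuous_iff_isOpen_preimage.1 hu.2.2.2.1 α).isClosed_compl

/-- fuzzy numbers are determined by their cuts on (0,1] -/
lemma eq_of_cuts_eq {u v : ℝ → ℝ} (hu : IsFuzzyNumberR u) (hv : IsFuzzyNumberR v)
    (h : ∀ α ∈ Ioc (0:ℝ) 1, cutR u α = cutR v α) : u = v := by
  have key : ∀ {f g : ℝ → ℝ}, IsFuzzyNumberR f → IsFuzzyNumberR g →
      (∀ α ∈ Ioc (0:ℝ) 1, cutR f α = cutR g α) → ∀ x, f x ≤ g x := by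
    intro f g hf hg hfg x
    rcases le_or_gt (f x) 0 with h0 | h0
    · exact le_trans h0 (hg.1 x).1
    · have hx : x ∈ cutR f (f x) := by
        unfold cutR; rw [if_neg h0.ne']
        show f x ≤ f x
        exact le_rfl
      rw [hfg (f x) ⟨h0, (hf.1 x).2⟩] at hx
      unfold cutR at hx
      rw [if_neg h0.ne'] at hx
      exact hx
  funext x
  exact le_antisymm (key hu hv h x)
    (key hv hu (fun α hα => (h α hα).symm) x)

lemma eq_of_edist_zero {u v : FuzzyR} (h : edist u v = 0) : u = v := by
  apply Subtype.ext
  apply eq_of_cuts_eq u.2 v.2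
  intro α hα
  have hmem : α ∈ Icc (0:ℝ) 1 := ⟨hα.1.le, hα.2⟩
  have hle : EMetric.hausdorffEdist (cutR u.1 α) (cutR v.1 α) ≤ 0 := by
    rw [← h, edist_fuzzy_def]
    exact le_iSup (fun β : Icc (0:ℝ) 1 =>
      EMetric.hausdorffEdist (cutR u.1 β.1) (cutR v.1 β.1)) ⟨α, hmem⟩
  exact (EMetric.hausdorffEdist_zero_iff_eq_of_closed
    (cut_closed u.2 hα.1.ne') (cut_closed v.2 hα.1.ne')).1 (le_antisymm hle (zero_le))

/-- the sequence in FuzzyR -/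
noncomputable def uuu (n : ℕ) : FuzzyR := ⟨vvv n, vvv_fuzzy n⟩

lemma one_le_edist_uuu {n m : ℕ} (h : n ≠ m) : 1 ≤ edist (uuu n) (uuu m) := by
  wlog hlt : m < n generalizing n m
  · rw [edist_comm]
    exact this h.symm ((h.lt_or_gt).resolve_right hlt)
  have hα : ccc m ∈ Icc (0:ℝ) 1 := ⟨(ccc_pos m).le, ccc_le_one m⟩
  have hn : cutR (vvv n) (ccc m) = {0} := cut_high n (ccc_strict_anti hlt) (ccc_le_one m)
  have hm : cutR (vvv m) (ccc m) = Icc 0 1 := cut_low m (ccc_pos m) (le_refl _)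
  rw [edist_fuzzy_def]
  refine le_trans ?_ (le_iSup (fun β : Icc (0:ℝ) 1 =>
    EMetric.hausdorffEdist (cutR (uuu n).1 β.1) (cutR (uuu m).1 β.1)) ⟨ccc m, hα⟩)
  show (1:ENNReal) ≤ EMetric.hausdorffEdist (cutR (vvv n) (ccc m)) (cutR (vvv m) (ccc m))
  rw [hn, hm, EMetric.hausdorffEdist, EMetric.hausdorffEdist_comm]
  refine le_trans ?_ (EMetric.infEdist_le_hausdorffEdist_of_mem
    (x := (1:ℝ)) (by exact ⟨zero_le_one, le_refl 1⟩))
  rw [EMetric.infEdist_singleton]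
  rw [edist_dist]
  simp [Real.dist_eq]

lemma closed_range_uuu : IsClosed (Set.range uuu) := by
  apply isClosed_of_closure_subset
  intro v hv
  rw [EMetric.mem_closure_iff] at hv
  obtain ⟨w, hw, hdist⟩ := hv (1/2) (by norm_num)
  obtain ⟨n, rfl⟩ := hw
  have h0 : edist v (uuu n) = 0 := by
    refine le_antisymm (ENNReal.le_of_forall_pos_le_add fun ε hε _ => ?_) (zero_le)
    have hpos : (0:ENNReal) < min (ε:ENNReal) (1/2) := by
      apply lt_min
      · exact_mod_cast hε
      · norm_num
    obtain ⟨w, hw, hd⟩ := hv _ hpos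
    obtain ⟨m, rfl⟩ := hw
    have hnm : n = m := by
      by_contra hne
      have h1 := one_le_edist_uuu hne
      have h2 : edist (uuu n) (uuu m) < 1 := by
        calc edist (uuu n) (uuu m) ≤ edist (uuu n) v + edist v (uuu m) := edist_triangle _ _ _
          _ < 1/2 + 1/2 := by
              apply ENNReal.add_lt_add
              · rwa [edist_comm]
              · exact lt_of_lt_of_le hd (min_le_right _ _)
          _ = 1 := ENNReal.add_halves 1
      exact absurd h2 (not_lt.2 h1)
    subst hnm
    calc edist v (uuu n) ≤ min (ε:ENNReal) (1/2) := hd.le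
      _ ≤ ε := min_le_left _ _
      _ = 0 + ε := (zero_add _).symm
  exact ⟨n, (eq_of_edist_zero h0).symm⟩

lemma not_compact_range_uuu : ¬ IsCompact (Set.range uuu) := by
  intro hc
  obtain ⟨t, ht⟩ := hc.elim_finite_subcover (fun n => Metric.eball (uuu n) 1)
    (fun n => EMetric.isOpen_ball)
    (by rintro v ⟨n, rfl⟩; exact mem_iUnion.2 ⟨n, EMetric.mem_ball_self one_pos⟩)
  obtain ⟨m, hm⟩ := Infinite.exists_notMem_finset t
  have hmem : uuu m ∈ ⋃ n ∈ t, Metric.eball (uuu n) 1 := ht ⟨m, rfl⟩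
  simp only [mem_iUnion] at hmem
  obtain ⟨n, hn, hball⟩ := hmem
  have hne : m ≠ n := fun h => hm (h ▸ hn)
  rw [EMetric.mem_ball] at hball
  exact absurd hball (not_lt.2 (one_le_edist_uuu hne))

lemma equi_uuu : ∀ α₀ ∈ Ioc (0:ℝ) 1, ∀ ε > 0, ∃ δ > 0, ∀ n : ℕ, ∀ α' ∈ Icc (α₀ - δ) α₀,
    hausdorffDist (cutR (vvv n) α') (cutR (vvv n) α₀) < ε := by
  intro α₀ hα₀ ε hε
  obtain ⟨hα₀0, hα₀1⟩ := hα₀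
  by_cases hhalf : α₀ ≤ 1/2
  · refine ⟨α₀/2, by linarith, ?_⟩
    intro n α' hα'
    have h1 : 0 < α' := by linarith [hα'.1]
    have h2 : α' ≤ ccc n := le_trans (le_trans hα'.2 hhalf) (ccc_gt_half n).le
    have h3 : α₀ ≤ ccc n := le_trans hhalf (ccc_gt_half n).le
    rw [cut_low n h1 h2, cut_low n hα₀0 h3, Metric.hausdorffDist_self_zero]
    exact hε
  · push_neg at hhalf
    have hex : ∃ m, ccc m < α₀ := by
      obtain ⟨m, hm⟩ := exists_nat_gt (1/(α₀ - 1/2))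
      refine ⟨m, ?_⟩
      have hpos : 0 < α₀ - 1/2 := by linarith
      have hlt : 1/((m:ℝ)+2) < α₀ - 1/2 := by
        rw [div_lt_iff₀ (by positivity)]
        rw [div_lt_iff₀ hpos] at hm
        nlinarith [nat_cast_nn m]
      unfold ccc; linarith
    classical
    set m₀ := Nat.find hex with hm₀def
    have hm₀ : ccc m₀ < α₀ := Nat.find_spec hex
    refine ⟨min (α₀/2) ((α₀ - ccc m₀)/2), lt_min (by linarith) (by linarith), ?_⟩
    intro n α' hα'
    have hminle1 := min_le_left (α₀/2) ((α₀ - ccc m₀)/2)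
    have hminle2 := min_le_right (α₀/2) ((α₀ - ccc m₀)/2)
    have h1 : 0 < α' := by linarith [hα'.1]
    by_cases hn : α₀ ≤ ccc n
    · rw [cut_low n h1 (le_trans hα'.2 hn), cut_low n hα₀0 hn,
        Metric.hausdorffDist_self_zero]
      exact hε
    · push_neg at hn
      have hge : m₀ ≤ n := by
        by_contra hlt
        push_neg at hlt
        exact Nat.find_min hex hlt hn
      have hcn : ccc n ≤ ccc m₀ := ccc_anti hge
      have h2 : ccc n < α' := by linarith [hα'.1]
      rw [cut_high n h2 (le_trans hα'.2 hα₀1), cut_high n hn hα₀1,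
        Metric.hausdorffDist_self_zero]
      exact hε


/-- There is a uniformly support-bounded sequence of fuzzy numbers on `ℝ` with
equi-left-continuous cut-functions on `(0,1]` whose range is closed but not compact
in `(E¹,d_∞)`; hence the compactness criterion
"closed + uniformly support-bounded + equi-left-continuous cuts ⇒ compact" is false. -/
theorem counterexample_compactness_criterion :
    (∃ u : ℕ → FuzzyR,
      (∃ K : Set ℝ, IsCompact K ∧ ∀ n, cutR (u n).1 0 ⊆ K) ∧
      (∀ α₀ ∈ Ioc (0:ℝ) 1, ∀ ε > 0, ∃ δ > 0, ∀ n : ℕ, ∀ α' ∈ Icc (α₀ - δ) α₀,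
        hausdorffDist (cutR (u n).1 α') (cutR (u n).1 α₀) < ε) ∧
      IsClosed (Set.range u) ∧ ¬ IsCompact (Set.range u)) ∧
    ¬ (∀ U : Set FuzzyR, IsClosed U →
        (∃ K : Set ℝ, IsCompact K ∧ ∀ u ∈ U, cutR u.1 0 ⊆ K) →
        (∀ α₀ ∈ Ioc (0:ℝ) 1, ∀ ε > 0, ∃ δ > 0, ∀ u ∈ U, ∀ α' ∈ Icc (α₀ - δ) α₀,
          hausdorffDist (cutR u.1 α') (cutR u.1 α₀) < ε) →
        IsCompact U) := by
  constructor
  · exact ⟨uuu, ⟨Icc 0 1, isCompact_Icc, cut_zero_subset⟩, equi_uuu,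
      closed_range_uuu, not_compact_range_uuu⟩
  · intro h
    apply not_compact_range_uuu
    apply h (Set.range uuu) closed_range_uuu
    · exact ⟨Icc 0 1, isCompact_Icc, by rintro _ ⟨n, rfl⟩; exact cut_zero_subset n⟩
    · intro α₀ hα₀ ε hε
      obtain ⟨δ, hδ, hδ'⟩ := equi_uuu α₀ hα₀ ε hε
      exact ⟨δ, hδ, by rintro _ ⟨n, rfl⟩; exact hδ' n⟩
end
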